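/- Let μ be a probability measure on ℝ with a Hall-class Pareto-type tail with extreme value index γ > 0 and parameters c₀ > 0, c₁ ∈ ℝ, β > 0. Then ω^{1/γ} · ∫_{(ω,∞)} ( γ^{-1} log(y/ω) − 1 )² dμ(y) → c₀ as ω → ∞; i.e. the truncated second moment of the score γ^{-1} log(Y/ω) − 1, normalized by the tail probability, converges to 1. -/

import Mathlib

/-!
Write `u = γ⁻¹ log (y / ω)` for the score and `S` for the survival function. On `(ω, ∞)` the
event `u > t` is `y > ω e^{γt}`, so the layer-cake formula gives
`∫_{(ω,∞)} u^p dμ = p ∫_0^∞ t^{p-1} S(ω e^{γt}) dt`. Writing `h y = y^{1/γ} S y`, one has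
`ω^{1/γ} S(ω e^{γt}) = e^{-t} h(ω e^{γt})`; the Hall expansion gives `h → c₀`, so `h` is eventually
bounded and dominated convergence yields `ω^{1/γ} ∫_{(ω,∞)} u^p dμ → c₀ Γ(p+1)` for every `p > 0`.
Expanding `(u - 1)² = u² - 2u + 1` gives the limit `c₀ (Γ(3) - 2 Γ(2) + 1) = c₀`.
-/

open MeasureTheory Filter Topology Set Real

section Score

variable {μ : Measure ℝ} {γ ω p : ℝ}

lemma score_nonneg (hω : 0 < ω) (hγ : 0 ≤ γ) {y : ℝ} (hy : ω < y) :
    0 ≤ γ⁻¹ * log (y / ω) :=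
  mul_nonneg (inv_nonneg.2 hγ) (log_nonneg ((one_le_div hω).2 hy.le))

lemma setOf_lt_score_inter_Ioi (hω : 0 < ω) (hγ : 0 < γ) {t : ℝ} (ht : 0 ≤ t) :
    {y | t < γ⁻¹ * log (y / ω)} ∩ Ioi ω = Ioi (ω * exp (γ * t)) := by
  have hω_le : ω ≤ ω * exp (γ * t) := le_mul_of_one_le_right hω.le (one_le_exp (by positivity))
  ext y
  simp only [mem_inter_iff, mem_ofPred_eq, mem_Ioi]
  constructor
  · rintro ⟨hty, hy⟩
    rwa [lt_inv_mul_iff₀ hγ, lt_log_iff_exp_lt (div_pos (hω.trans hy) hω), lt_div_iff₀' hω] at hty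
  · intro hy
    refine ⟨?_, hω_le.trans_lt hy⟩
    rwa [lt_inv_mul_iff₀ hγ, lt_log_iff_exp_lt (div_pos (hω.trans_le (hω_le.trans hy.le)) hω),
      lt_div_iff₀' hω]

lemma score_rpow_nonneg_ae (hω : 0 < ω) (hγ : 0 < γ) :
    0 ≤ᵐ[μ.restrict (Ioi ω)] fun y ↦ (γ⁻¹ * log (y / ω)) ^ p :=
  ae_restrict_of_forall_mem measurableSet_Ioi fun _ hy ↦ rpow_nonneg (score_nonneg hω hγ.le hy) _

lemma measurable_score (γ ω : ℝ) : Measurable fun y : ℝ ↦ γ⁻¹ * log (y / ω) := by fun_prop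

variable [IsFiniteMeasure μ]

lemma measurable_measureReal_Ioi : Measurable fun x ↦ μ.real (Ioi x) :=
  Antitone.measurable fun _ _ hab ↦ measureReal_mono (Ioi_subset_Ioi hab)

lemma lintegral_score_rpow (hω : 0 < ω) (hγ : 0 < γ) (hp : 0 < p) :
    ∫⁻ y in Ioi ω, ENNReal.ofReal ((γ⁻¹ * log (y / ω)) ^ p) ∂μ =
      ENNReal.ofReal p *
        ∫⁻ t in Ioi 0, ENNReal.ofReal (μ.real (Ioi (ω * exp (γ * t))) * t ^ (p - 1)) := by
  rw [lintegral_rpow_eq_lintegral_meas_lt_mul (μ.restrict (Ioi ω))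
    (ae_restrict_of_forall_mem measurableSet_Ioi fun y ↦ score_nonneg hω hγ.le)
    (measurable_score γ ω).aemeasurable hp]
  congr 1
  refine setLIntegral_congr_fun measurableSet_Ioi fun t ht ↦ ?_
  rw [Measure.restrict_apply (measurableSet_lt measurable_const (measurable_score γ ω)),
    setOf_lt_score_inter_Ioi hω hγ ht.le, ENNReal.ofReal_mul measureReal_nonneg,
    ofReal_measureReal]

lemma integral_score_rpow (hω : 0 < ω) (hγ : 0 < γ) (hp : 0 < p) :
    ∫ y in Ioi ω, (γ⁻¹ * log (y / ω)) ^ p ∂μ =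
      p * ∫ t in Ioi 0, μ.real (Ioi (ω * exp (γ * t))) * t ^ (p - 1) := by
  rw [integral_eq_lintegral_of_nonneg_ae
      (score_rpow_nonneg_ae hω hγ)
      ((measurable_score γ ω).pow_const p).aestronglyMeasurable,
    lintegral_score_rpow hω hγ hp, ENNReal.toReal_mul, ENNReal.toReal_ofReal hp.le,
    integral_eq_lintegral_of_nonneg_ae
      (ae_restrict_of_forall_mem measurableSet_Ioi fun t ht ↦
        mul_nonneg measureReal_nonneg (rpow_nonneg ht.le _))
      ((measurable_measureReal_Ioi.comp (by fun_prop)).mul (by fun_prop)).aestronglyMeasurable]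

lemma integrableOn_score_rpow (hω : 0 < ω) (hγ : 0 < γ) (hp : 0 < p)
    (h : IntegrableOn (fun t ↦ μ.real (Ioi (ω * exp (γ * t))) * t ^ (p - 1)) (Ioi 0)) :
    IntegrableOn (fun y ↦ (γ⁻¹ * log (y / ω)) ^ p) (Ioi ω) μ := by
  refine ⟨((measurable_score γ ω).pow_const p).aestronglyMeasurable, ?_⟩
  rw [hasFiniteIntegral_iff_ofReal
      (score_rpow_nonneg_ae hω hγ),
    lintegral_score_rpow hω hγ hp]
  exact ENNReal.mul_lt_top ENNReal.ofReal_lt_top h.lintegral_lt_top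

end Score

lemma rpow_eq_exp_neg_mul_rpow_mul_exp {ω γ : ℝ} (hω : 0 < ω) (hγ : γ ≠ 0) (t : ℝ) :
    ω ^ (1 / γ) = exp (-t) * (ω * exp (γ * t)) ^ (1 / γ) := by
  rw [mul_rpow hω.le (exp_pos _).le, ← exp_mul, show γ * t * (1 / γ) = t by field_simp, exp_neg]
  field_simp

section ParetoTail

variable {μ : Measure ℝ} {γ c p : ℝ}

lemma exists_eventually_rpow_mul_measureReal_Ioi_mul_exp_le (hγ : 0 < γ)
    (hc : Tendsto (fun y ↦ y ^ (1 / γ) * μ.real (Ioi y)) atTop (𝓝 c)) :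
    ∃ M, ∀ᶠ ω in atTop, 0 < ω ∧
      ∀ t, 0 ≤ t → ω ^ (1 / γ) * μ.real (Ioi (ω * exp (γ * t))) ≤ M * exp (-t) := by
  obtain ⟨Y, hY⟩ := eventually_atTop.1 (hc.eventually (eventually_le_nhds (lt_add_one c)))
  refine ⟨c + 1, ?_⟩
  filter_upwards [eventually_ge_atTop Y, eventually_gt_atTop 0] with ω hωY hω
  refine ⟨hω, fun t ht ↦ ?_⟩
  have hω_le : ω ≤ ω * exp (γ * t) := le_mul_of_one_le_right hω.le (one_le_exp (by positivity))
  rw [rpow_eq_exp_neg_mul_rpow_mul_exp hω hγ.ne' t, mul_assoc, mul_comm (c + 1)]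
  exact mul_le_mul_of_nonneg_left (hY _ (hωY.trans hω_le)) (exp_pos _).le

variable [IsFiniteMeasure μ]

lemma eventually_integrableOn_measureReal_Ioi_mul_exp_mul_rpow (hγ : 0 < γ) (hp : 0 < p)
    (hc : Tendsto (fun y ↦ y ^ (1 / γ) * μ.real (Ioi y)) atTop (𝓝 c)) :
    ∀ᶠ ω in atTop,
      IntegrableOn (fun t ↦ μ.real (Ioi (ω * exp (γ * t))) * t ^ (p - 1)) (Ioi 0) := by
  obtain ⟨M, hM⟩ := exists_eventually_rpow_mul_measureReal_Ioi_mul_exp_le hγ hc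
  filter_upwards [hM] with ω ⟨hω, hωM⟩
  refine Integrable.mono' ((GammaIntegral_convergent hp).const_mul ((ω ^ (1 / γ))⁻¹ * M))
    ((measurable_measureReal_Ioi.comp (by fun_prop)).mul (by fun_prop)).aestronglyMeasurable ?_
  filter_upwards [ae_restrict_mem measurableSet_Ioi] with t (ht : 0 < t)
  have htp : 0 ≤ t ^ (p - 1) := rpow_nonneg ht.le _
  have hle := (le_inv_mul_iff₀ (rpow_pos_of_pos hω _)).2 (hωM t ht.le)
  rw [norm_of_nonneg (mul_nonneg measureReal_nonneg htp)]
  calc μ.real (Ioi (ω * exp (γ * t))) * t ^ (p - 1)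
      ≤ (ω ^ (1 / γ))⁻¹ * (M * exp (-t)) * t ^ (p - 1) := mul_le_mul_of_nonneg_right hle htp
    _ = (ω ^ (1 / γ))⁻¹ * M * (exp (-t) * t ^ (p - 1)) := by ring

lemma tendsto_integral_rpow_mul_measureReal_Ioi_mul_exp_mul_rpow (hγ : 0 < γ) (hp : 0 < p)
    (hc : Tendsto (fun y ↦ y ^ (1 / γ) * μ.real (Ioi y)) atTop (𝓝 c)) :
    Tendsto (fun ω ↦ ∫ t in Ioi 0, ω ^ (1 / γ) * μ.real (Ioi (ω * exp (γ * t))) * t ^ (p - 1))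
      atTop (𝓝 (c * Gamma p)) := by
  obtain ⟨M, hM⟩ := exists_eventually_rpow_mul_measureReal_Ioi_mul_exp_le hγ hc
  rw [Gamma_eq_integral hp, ← integral_const_mul]
  refine tendsto_integral_filter_of_dominated_convergence (fun t ↦ M * (exp (-t) * t ^ (p - 1)))
    (Eventually.of_forall fun ω ↦
      (((measurable_measureReal_Ioi.comp (by fun_prop)).const_mul _).mul
        (by fun_prop)).aestronglyMeasurable) ?_ ((GammaIntegral_convergent hp).const_mul M) ?_
  · filter_upwards [hM] with ω ⟨hω, hωM⟩
    filter_upwards [ae_restrict_mem measurableSet_Ioi] with t (ht : 0 < t)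
    have htp : 0 ≤ t ^ (p - 1) := rpow_nonneg ht.le _
    rw [norm_of_nonneg (by positivity), ← mul_assoc]
    exact mul_le_mul_of_nonneg_right (hωM t ht.le) htp
  · refine Eventually.of_forall fun t ↦ ?_
    have hlim := ((hc.comp (tendsto_id.atTop_mul_const (exp_pos (γ * t)))).const_mul
      (exp (-t))).mul_const (t ^ (p - 1))
    rw [show c * (exp (-t) * t ^ (p - 1)) = exp (-t) * c * t ^ (p - 1) by ring]
    refine hlim.congr' ?_
    filter_upwards [eventually_gt_atTop 0] with ω hω
    simp only [Function.comp_apply, id]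
    rw [rpow_eq_exp_neg_mul_rpow_mul_exp hω hγ.ne' t]
    ring

theorem tendsto_rpow_mul_integral_score_rpow (hγ : 0 < γ) (hp : 0 < p)
    (hc : Tendsto (fun y ↦ y ^ (1 / γ) * μ.real (Ioi y)) atTop (𝓝 c)) :
    Tendsto (fun ω ↦ ω ^ (1 / γ) * ∫ y in Ioi ω, (γ⁻¹ * log (y / ω)) ^ p ∂μ)
      atTop (𝓝 (c * Gamma (p + 1))) := by
  have hlim := (tendsto_integral_rpow_mul_measureReal_Ioi_mul_exp_mul_rpow hγ hp hc).const_mul p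
  rw [Gamma_add_one hp.ne', mul_left_comm]
  refine hlim.congr' ?_
  filter_upwards [eventually_gt_atTop 0] with ω hω
  rw [integral_score_rpow hω hγ hp, mul_left_comm, ← integral_const_mul (ω ^ (1 / γ))]
  simp only [mul_assoc]

theorem tendsto_rpow_mul_integral_score_sub_one_sq (hγ : 0 < γ)
    (hc : Tendsto (fun y ↦ y ^ (1 / γ) * μ.real (Ioi y)) atTop (𝓝 c)) :
    Tendsto (fun ω ↦ ω ^ (1 / γ) * ∫ y in Ioi ω, (γ⁻¹ * log (y / ω) - 1) ^ 2 ∂μ)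
      atTop (𝓝 c) := by
  have hΓ₃ : Gamma (2 + 1) = 2 := by rw [Gamma_add_one two_ne_zero, Gamma_two, mul_one]
  have hΓ₂ : Gamma (1 + 1) = 1 := by rw [one_add_one_eq_two, Gamma_two]
  have hlim := ((tendsto_rpow_mul_integral_score_rpow hγ two_pos hc).sub
    ((tendsto_rpow_mul_integral_score_rpow hγ one_pos hc).const_mul 2)).add hc
  rw [hΓ₃, hΓ₂, show c * 2 - 2 * (c * 1) + c = c by ring] at hlim
  refine hlim.congr' ?_
  filter_upwards [eventually_gt_atTop 0,
    eventually_integrableOn_measureReal_Ioi_mul_exp_mul_rpow hγ two_pos hc,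
    eventually_integrableOn_measureReal_Ioi_mul_exp_mul_rpow hγ one_pos hc] with ω hω h₂ h₁
  have hu₂ := integrableOn_score_rpow (μ := μ) hω hγ two_pos h₂
  have hu₁ := (integrableOn_score_rpow (μ := μ) hω hγ one_pos h₁).const_mul 2
  have hu₂₁ : IntegrableOn
      (fun y ↦ (γ⁻¹ * log (y / ω)) ^ (2 : ℝ) - 2 * (γ⁻¹ * log (y / ω)) ^ (1 : ℝ)) (Ioi ω) μ :=
    hu₂.sub hu₁
  have hexpand : ∀ u : ℝ, (u - 1) ^ 2 = u ^ (2 : ℝ) - 2 * u ^ (1 : ℝ) + 1 := fun u ↦ by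
    rw [rpow_two, rpow_one]; ring
  simp_rw [hexpand]
  rw [integral_add hu₂₁ (integrable_const 1), integral_sub hu₂ hu₁, integral_const_mul,
    setIntegral_const, smul_eq_mul, mul_one]
  ring

end ParetoTail

lemma tendsto_rpow_mul_of_eventually_eq_hall {S r : ℝ → ℝ} {γ c₀ c₁ β : ℝ} (hβ : 0 < β)
    (hS : ∀ᶠ y in atTop, S y = y ^ (-(1 / γ)) * (c₀ + c₁ * y ^ (-β) + r y))
    (hr : Tendsto (fun y ↦ y ^ β * r y) atTop (𝓝 0)) :
    Tendsto (fun y ↦ y ^ (1 / γ) * S y) atTop (𝓝 c₀) := by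
  have hr₀ : Tendsto r atTop (𝓝 0) := by
    have h := (tendsto_rpow_neg_atTop hβ).mul hr
    rw [zero_mul] at h
    refine h.congr' ?_
    filter_upwards [eventually_gt_atTop 0] with y hy
    rw [← mul_assoc, ← rpow_add hy, neg_add_cancel, rpow_zero, one_mul]
  have hlim : Tendsto (fun y ↦ c₀ + c₁ * y ^ (-β) + r y) atTop (𝓝 (c₀ + c₁ * 0 + 0)) :=
    (tendsto_const_nhds.add (tendsto_const_nhds.mul (tendsto_rpow_neg_atTop hβ))).add hr₀
  rw [mul_zero, add_zero, add_zero] at hlim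
  refine hlim.congr' ?_
  filter_upwards [hS, eventually_gt_atTop 0] with y hSy hy
  rw [hSy, ← mul_assoc, ← rpow_add hy, add_neg_cancel, rpow_zero, one_mul]

theorem hall_tail_score_second_moment_general
    (μ : Measure ℝ) [IsProbabilityMeasure μ]
    (γ c₀ c₁ β : ℝ) (hγ : 0 < γ) (hβ : 0 < β) (r : ℝ → ℝ)
    (hS : ∀ᶠ y in atTop,
      (μ (Set.Ioi y)).toReal = y ^ (-(1 / γ)) * (c₀ + c₁ * y ^ (-β) + r y))
    (hr : Tendsto (fun y : ℝ => y ^ β * r y) atTop (𝓝 0)) :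
    Tendsto (fun ω : ℝ =>
        ω ^ (1 / γ) * ∫ y in Set.Ioi ω, (γ⁻¹ * Real.log (y / ω) - 1) ^ 2 ∂μ)
      atTop (𝓝 c₀) :=
  tendsto_rpow_mul_integral_score_sub_one_sq hγ
    (tendsto_rpow_mul_of_eventually_eq_hall (S := fun y ↦ μ.real (Ioi y)) hβ hS hr)

/-- for a Hall-class Pareto-type tail, the truncated second
moment of the score satisfies
`ω^{1/γ} ∫_{(ω,∞)} (γ⁻¹ log(y/ω) − 1)² dμ → c₀`. -/
theorem hall_tail_score_second_moment
    (μ : Measure ℝ) [IsProbabilityMeasure μ]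
    (γ c₀ c₁ β : ℝ) (hγ : 0 < γ) (hc₀ : 0 < c₀) (hβ : 0 < β) (r : ℝ → ℝ)
    (hS : ∀ᶠ y in atTop,
      (μ (Set.Ioi y)).toReal = y ^ (-(1 / γ)) * (c₀ + c₁ * y ^ (-β) + r y))
    (hr : Tendsto (fun y : ℝ => y ^ β * r y) atTop (𝓝 0)) :
    Tendsto (fun ω : ℝ =>
        ω ^ (1 / γ) * ∫ y in Set.Ioi ω, (γ⁻¹ * Real.log (y / ω) - 1) ^ 2 ∂μ)
      atTop (𝓝 c₀) :=
  hall_tail_score_second_moment_general μ γ c₀ c₁ β hγ hβ r hS hr
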